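/- arXiv:2110.06445 — 2 statements merged into one kernel-verified Lean document; each statement's English description precedes it below -/
import Mathlib

section
/- Let π be a probability density on ℝ^D and let q be a multiproposal kernel generating proposal sets Θ* = (θ*_1, ..., θ*_{P+1}) containing the current state. Suppose the transition from current state θ*_{P+1} selects the next state θ*_p from Θ* with probability π(θ*_p)/∑_{j=1}^{P+1} π(θ*_j). If q satisfies the symmetry condition q(θ*_1, Θ*) = q(θ*_2, Θ*) = ... = q(θ*_{P+1}, Θ*), then the resulting transition probabilities satisfy detailed balance with respect to π: π(θ*_{P+1}) p(θ*_{P+1}, θ*_p) = π(θ*_p) p(θ*_p, θ*_{P+1}) for all p. -/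
theorem multiproposal_detailed_balance {α ι : Type*} [Fintype ι] (π : α → ℝ)
    (q : α → (ι → α) → ℝ) (Θ : ι → α) (hsymm : ∀ i j, q (Θ i) Θ = q (Θ j) Θ)
    (p : α → α → ℝ) (hp : ∀ i j, p (Θ i) (Θ j) = q (Θ i) Θ * π (Θ j) / ∑ k, π (Θ k))
    (i j : ι) :
    π (Θ i) * p (Θ i) (Θ j) = π (Θ j) * p (Θ j) (Θ i) := by
  rw [hp, hp, hsymm i j]
  ring

theorem stmt0_general {α : Type*} (P : ℕ) (π : α → ℝ)
    (q : α → (Fin (P + 1) → α) → ℝ)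
    (Θ : Fin (P + 1) → α)
    (hsymm : ∀ i j : Fin (P + 1), q (Θ i) Θ = q (Θ j) Θ)
    (p : α → α → ℝ)
    (hp : ∀ i j : Fin (P + 1),
      p (Θ i) (Θ j) = q (Θ i) Θ * π (Θ j) / ∑ k, π (Θ k)) :
    ∀ i : Fin (P + 1),
      π (Θ (Fin.last P)) * p (Θ (Fin.last P)) (Θ i)
        = π (Θ i) * p (Θ i) (Θ (Fin.last P)) :=
  multiproposal_detailed_balance π q Θ hsymm p hp (Fin.last P)

/-- Multiproposal selection with a symmetric proposal-set kernel satisfies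
detailed balance: with `P + 1` states `Θ 0, ..., Θ P` (the last being the current state),
transition probabilities `p (Θ i) (Θ j) = q (Θ i) Θ * π (Θ j) / ∑ₖ π (Θ k)`, and the
symmetry condition `q (Θ i) Θ = q (Θ j) Θ`, we have
`π (Θ last) * p (Θ last) (Θ i) = π (Θ i) * p (Θ i) (Θ last)` for all `i`. -/
theorem stmt0 {α : Type*} (P : ℕ) (π : α → ℝ) (hπ : ∀ a, 0 < π a)
    (q : α → (Fin (P + 1) → α) → ℝ)
    (Θ : Fin (P + 1) → α)
    (hsymm : ∀ i j : Fin (P + 1), q (Θ i) Θ = q (Θ j) Θ)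
    (p : α → α → ℝ)
    (hp : ∀ i j : Fin (P + 1),
      p (Θ i) (Θ j) = q (Θ i) Θ * π (Θ j) / ∑ k, π (Θ k)) :
    ∀ i : Fin (P + 1),
      π (Θ (Fin.last P)) * p (Θ (Fin.last P)) (Θ i)
        = π (Θ i) * p (Θ i) (Θ (Fin.last P)) :=
  stmt0_general P π q Θ hsymm p hp
end

section
/- Let v_1, ..., v_D, 0 be the vertices of a regular simplex in ℝ^D with edge length λ, let C be symmetric positive definite, and for Q ∈ O(D) define θ*_{d'} = C^{1/2} Q v_{d'} (d' ≤ D), θ*_{D+1} = 0. Then for any fixed d ∈ {1,...,D} there exists Q_d ∈ O(D) such that the set {θ*_1 - θ*_d, ..., θ*_{d-1} - θ*_d, -θ*_d, θ*_{d+1} - θ*_d, ..., θ*_D - θ*_d, 0} equals {C^{1/2} Q_d v_1, ..., C^{1/2} Q_d v_D, 0}. -/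
open Matrix RealInnerProductSpace

/-- Let `v 1, ..., v D, 0` be the vertices of a regular simplex in `ℝ^D`
with edge length `lam`, let `C` be symmetric positive definite with square root `S`
(`S.PosDef`, `S * S = C`), and for `Q ∈ O(D)` set `θ* d' = S Q (v d')`, `θ*_{D+1} = 0`.
Then for any fixed `d` there exists `Qd ∈ O(D)` such that the configuration of the
preconditioned rotated simplex viewed from the vertex `θ* d`, namely the set
`{θ* 1 - θ* d, ..., -θ* d, ..., θ* D - θ* d, 0}`, equals the set
`{S Qd (v 1), ..., S Qd (v D), 0}`. -/
theorem stmt9 (D : ℕ) (lam : ℝ) (hlam : 0 < lam)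
    (v : Fin D → EuclideanSpace ℝ (Fin D))
    (hnorm : ∀ d, ‖v d‖ = lam)
    (hdist : ∀ d d' : Fin D, d ≠ d' → dist (v d) (v d') = lam)
    (C S : Matrix (Fin D) (Fin D) ℝ)
    (hC : C.PosDef) (hS : S.PosDef) (hSsq : S * S = C)
    (Q : Matrix (Fin D) (Fin D) ℝ) (hQ : Q ∈ Matrix.orthogonalGroup (Fin D) ℝ)
    (d : Fin D) :
    ∃ Qd ∈ Matrix.orthogonalGroup (Fin D) ℝ,
      ((fun x : EuclideanSpace ℝ (Fin D) =>
          x - Matrix.toEuclideanLin (S * Q) (v d)) ''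
        (Set.range (fun d' => Matrix.toEuclideanLin (S * Q) (v d')) ∪ {0}))
      = ((fun w : EuclideanSpace ℝ (Fin D) => Matrix.toEuclideanLin (S * Qd) w) ''
        (Set.range v ∪ {0})) := by
  set u : Fin D → (Fin D → ℝ) := fun d' => (WithLp.equiv 2 (Fin D → ℝ)) (v d') with hu
  set w : Fin D → ℝ := u d with hw
  set c : ℝ := 2 / lam ^ 2 with hc
  set A : Matrix (Fin D) (Fin D) ℝ := vecMulVec w w with hA
  set M : Matrix (Fin D) (Fin D) ℝ := 1 - c • A with hM
  have hlam2 : (lam : ℝ) ^ 2 ≠ 0 := pow_ne_zero _ hlam.ne'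
  -- dot products
  have hdot_self : w ⬝ᵥ w = lam ^ 2 := by
    have h := real_inner_self_eq_norm_sq (v d)
    rw [hnorm d] at h
    rw [← h]
    simp [PiLp.inner_apply, dotProduct, hw, hu, -real_inner_self_eq_norm_sq]
    rw [EuclideanSpace.norm_eq, Real.sq_sqrt (Finset.sum_nonneg fun _ _ => sq_nonneg _)]
    exact Finset.sum_congr rfl fun _ _ => by rw [Real.norm_eq_abs, sq_abs, sq]
  have hdot : ∀ d' : Fin D, d' ≠ d → w ⬝ᵥ u d' = lam ^ 2 / 2 := by
    intro d' hd'
    have h1 : ‖v d - v d'‖ ^ 2 = ‖v d‖ ^ 2 - 2 * ⟪v d, v d'⟫ + ‖v d'‖ ^ 2 :=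
      norm_sub_sq_real _ _
    have h2 : ‖v d - v d'‖ = lam := by
      rw [← dist_eq_norm]; exact hdist d d' (Ne.symm hd')
    rw [h2, hnorm d, hnorm d'] at h1
    have h3 : ⟪v d, v d'⟫ = lam ^ 2 / 2 := by linarith
    rw [← h3]
    simp [PiLp.inner_apply, dotProduct, hw, hu]
    exact Finset.sum_congr rfl fun _ _ => mul_comm _ _
  -- mulVec of A
  have hAmul : ∀ x : Fin D → ℝ, A *ᵥ x = (w ⬝ᵥ x) • w := by
    intro x
    funext i
    simp only [hA, mulVec, dotProduct, vecMulVec_apply, Pi.smul_apply, smul_eq_mul,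
      Finset.sum_mul]
    exact Finset.sum_congr rfl fun j _ => by ring
  -- A squared
  have hAsq : A * A = (lam ^ 2) • A := by
    ext i j
    simp only [hA, Matrix.mul_apply, vecMulVec_apply, Matrix.smul_apply, smul_eq_mul]
    rw [← hdot_self]
    simp only [dotProduct]
    rw [Finset.sum_mul]
    exact Finset.sum_congr rfl fun k _ => by ring
  -- M is symmetric
  have hAT : Aᵀ = A := by
    ext i j; simp [hA, vecMulVec_apply]; ring
  have hMsym : star M = M := by
    rw [star_eq_conjTranspose, conjTranspose_eq_transpose_of_trivial, hM,
      transpose_sub, transpose_one, transpose_smul, hAT]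
  -- M is orthogonal
  have hcc : c * (c * lam ^ 2) = 2 * c := by
    rw [hc]; field_simp
  have hMO : M ∈ Matrix.orthogonalGroup (Fin D) ℝ := by
    rw [Matrix.mem_orthogonalGroup_iff, ← conjTranspose_eq_transpose_of_trivial,
      ← star_eq_conjTranspose, hMsym]
    simp only [hM, sub_mul, mul_sub, one_mul, mul_one, Matrix.smul_mul,
      Matrix.mul_smul, hAsq, smul_smul, hcc]
    rw [two_mul, add_smul]
    abel
  -- action of M on vertices
  have hMv : ∀ d' : Fin D, M *ᵥ u d' =
      if d' = d then -(u d) else u d' - w := by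
    intro d'
    by_cases h : d' = d
    · subst h
      simp only [if_pos rfl, hM, Matrix.sub_mulVec, Matrix.one_mulVec,
        Matrix.smul_mulVec, hAmul, hdot_self, smul_smul]
      rw [← hw, hdot_self]
      have h2 : c * lam ^ 2 = 2 := by rw [hc]; field_simp
      rw [h2, two_smul]
      abel_nf
      simp
    · simp only [if_neg h, hM, Matrix.sub_mulVec, Matrix.one_mulVec,
        Matrix.smul_mulVec, hAmul, hdot d' h, smul_smul]
      have h2 : c * (lam ^ 2 / 2) = 1 := by rw [hc]; field_simp
      rw [h2, one_smul]
  refine ⟨Q * M, mul_mem hQ hMO, ?_⟩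
  -- composition of the linear maps
  have hcomp : ∀ x : EuclideanSpace ℝ (Fin D),
      Matrix.toEuclideanLin (S * (Q * M)) x
        = Matrix.toEuclideanLin (S * Q) (Matrix.toEuclideanLin M x) := by
    intro x
    simp only [Matrix.toEuclideanLin_apply, Equiv.apply_symm_apply,
      Matrix.mulVec_mulVec, mul_assoc]
  -- action of M as a Euclidean linear map
  have hMlin : ∀ d' : Fin D, Matrix.toEuclideanLin M (v d')
      = if d' = d then -(v d) else v d' - v d := by
    intro d'
    have h2 := hMv d'
    by_cases h : d' = d
    · rw [if_pos h] at h2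
      rw [if_pos h, Matrix.toEuclideanLin_apply]
      exact congrArg (WithLp.equiv 2 (Fin D → ℝ)).symm h2
    · rw [if_neg h] at h2
      rw [if_neg h, Matrix.toEuclideanLin_apply]
      exact congrArg (WithLp.equiv 2 (Fin D → ℝ)).symm h2
  set L := Matrix.toEuclideanLin (S * Q) with hL
  ext x
  simp only [Set.mem_image, Set.mem_union, Set.mem_range, Set.mem_singleton_iff]
  constructor
  · rintro ⟨y, (⟨d', rfl⟩ | rfl), rfl⟩
    · by_cases h : d' = d
      · subst h
        exact ⟨0, Or.inr rfl, by simp [hcomp]⟩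
      · refine ⟨v d', Or.inl ⟨d', rfl⟩, ?_⟩
        rw [hcomp, hMlin, if_neg h, map_sub]
    · refine ⟨v d, Or.inl ⟨d, rfl⟩, ?_⟩
      rw [hcomp, hMlin, if_pos rfl, map_neg]
      simp
  · rintro ⟨y, (⟨d', rfl⟩ | rfl), rfl⟩
    · by_cases h : d' = d
      · subst h
        refine ⟨0, Or.inr rfl, ?_⟩
        rw [hcomp, hMlin, if_pos rfl, map_neg]
        simp
      · refine ⟨L (v d'), Or.inl ⟨d', rfl⟩, ?_⟩
        rw [hcomp, hMlin, if_neg h, map_sub]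
    · exact ⟨L (v d), Or.inl ⟨d, rfl⟩, by simp [hcomp]⟩
end
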